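/- In the biased majority model on the torus T_{n,n} with von Neumann neighborhood and random initial coloring with p_b = ω(n^{-1}), with probability 1 - o(1) the initial generation contains some diagonal pair {(2i,2j),(2i+1,2j+1)} both of whose cells are blue, and consequently blue survives in all subsequent generations. -/

import Mathlib

open Filter

/-- Number of blue cells among the four von Neumann neighbors of `v` in the torus. -/
def vnCount (n : ℕ) (g : ZMod n × ZMod n → Bool) (v : ZMod n × ZMod n) : ℕ :=
  (if g (v.1 + 1, v.2) = true then 1 else 0) + (if g (v.1 - 1, v.2) = true then 1 else 0) +
    (if g (v.1, v.2 + 1) = true then 1 else 0) + (if g (v.1, v.2 - 1) = true then 1 else 0)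

/-- One synchronous step of the majority model on the torus `T_{n,n}` with von Neumann
neighborhood: strict majority among the 4 neighbors, ties conserve the current color. -/
def torusMajStep (n : ℕ) (g : ZMod n × ZMod n → Bool) : ZMod n × ZMod n → Bool :=
  fun v => if 2 < vnCount n g v then true else if vnCount n g v < 2 then false else g v

/-- One synchronous step of the biased majority model on the torus `T_{n,n}` with
von Neumann neighborhood: a cell becomes blue iff at least 2 of its 4 neighbors are blue. -/
def torusBMajStep (n : ℕ) (g : ZMod n × ZMod n → Bool) : ZMod n × ZMod n → Bool :=
  fun v => decide (2 ≤ vnCount n g v)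

/-- Moore (8-)adjacency on the torus `T_{n,n}`. -/
def mooreAdj (n : ℕ) (u v : ZMod n × ZMod n) : Prop :=
  u ≠ v ∧ (u.1 = v.1 ∨ u.1 = v.1 + 1 ∨ v.1 = u.1 + 1) ∧
    (u.2 = v.2 ∨ u.2 = v.2 + 1 ∨ v.2 = u.2 + 1)

/-- The Moore (8-)adjacency graph on the torus `T_{n,n}`. -/
def mooreGraph (n : ℕ) : SimpleGraph (ZMod n × ZMod n) where
  Adj := mooreAdj n
  symm := by
    constructor
    rintro u v ⟨h0, h1, h2⟩
    exact ⟨Ne.symm h0, by tauto, by tauto⟩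
  loopless := ⟨fun v h => h.1 rfl⟩

open scoped Classical in
/-- Probability, under the product measure where each vertex is blue (`true`)
independently with probability `p`, of the event `E`. -/
noncomputable def pr {α : Type*} [Fintype α] [DecidableEq α] (p : ℝ)
    (E : (α → Bool) → Prop) : ℝ :=
  ∑ g : α → Bool, if E g then (∏ v, if g v = true then p else 1 - p) else 0

/-!
Inside a `2 × 2` block of the torus, if one diagonal is blue then each cell of the other diagonal
has two blue neighbours, so in the next generation the other diagonal is blue; hence a blue
diagonal of a block is never lost. The pairs `{(2i, 2j), (2i+1, 2j+1)}`, `i, j < ⌊N/2⌋`, are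
disjoint, so under the product measure (inclusion–exclusion over the pairs) none of them is
entirely blue with probability exactly `(1 - p²)^⌊N/2⌋² ≤ exp (-(⌊N/2⌋ p)²)`, which tends to `0`
when `N p → ∞`.
-/

open Finset

section Bernoulli

variable {α : Type*} [Fintype α] (p : ℝ)

noncomputable def bernoulliWeight (g : α → Bool) : ℝ :=
  ∏ v, if g v = true then p else 1 - p

lemma bernoulliWeight_nonneg {p : ℝ} (hp0 : 0 ≤ p) (hp1 : p ≤ 1) (g : α → Bool) :
    0 ≤ bernoulliWeight p g :=
  prod_nonneg fun v _ => by split <;> linarith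

variable [DecidableEq α]

noncomputable def bernoulliMean (f : (α → Bool) → ℝ) : ℝ :=
  ∑ g, f g * bernoulliWeight p g

variable {p}

lemma bernoulliMean_sum {ι : Type*} (s : Finset ι) (f : ι → (α → Bool) → ℝ) :
    bernoulliMean p (fun g => ∑ i ∈ s, f i g) = ∑ i ∈ s, bernoulliMean p (f i) := by
  simp only [bernoulliMean, sum_mul]
  exact sum_comm

lemma bernoulliMean_const_mul (c : ℝ) (f : (α → Bool) → ℝ) :
    bernoulliMean p (fun g => c * f g) = c * bernoulliMean p f := by
  simp only [bernoulliMean, mul_sum, mul_assoc]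

lemma bernoulliMean_prod_apply (f : α → Bool → ℝ) :
    bernoulliMean p (fun g => ∏ v, f v (g v)) = ∏ v, (f v true * p + f v false * (1 - p)) := by
  simp only [bernoulliMean, bernoulliWeight, ← prod_mul_distrib]
  rw [← Fintype.prod_sum (fun v b => f v b * if b = true then p else 1 - p)]
  simp only [Fintype.sum_bool, if_true, Bool.false_eq_true, if_false]

lemma bernoulliMean_prod_indicator (U : Finset α) :
    bernoulliMean p (fun g => ∏ v ∈ U, if g v = true then 1 else 0) = p ^ #U := by
  simp only [← Fintype.prod_ite_mem U]
  rw [bernoulliMean_prod_apply (fun v b => if v ∈ U then (if b = true then 1 else 0) else 1)]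
  rw [← prod_const, ← Fintype.prod_ite_mem U (fun _ => p)]
  refine prod_congr rfl fun v _ => ?_
  by_cases hv : v ∈ U <;> simp [hv]

lemma sum_bernoulliWeight : ∑ g : α → Bool, bernoulliWeight p g = 1 := by
  simpa [bernoulliMean] using bernoulliMean_prod_apply (p := p) (fun _ _ => 1)

open scoped Classical in
lemma pr_eq_sum_bernoulliWeight (E : (α → Bool) → Prop) :
    pr p E = ∑ g, if E g then bernoulliWeight p g else 0 := rfl

end Bernoulli

section Pr

variable {α : Type*} [Fintype α] [DecidableEq α] {p : ℝ}

open scoped Classical in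
lemma pr_eq_bernoulliMean (E : (α → Bool) → Prop) :
    pr p E = bernoulliMean p (fun g => if E g then 1 else 0) := by
  simp only [pr_eq_sum_bernoulliWeight, bernoulliMean, ite_mul, one_mul, zero_mul]

lemma pr_nonneg (hp0 : 0 ≤ p) (hp1 : p ≤ 1) (E : (α → Bool) → Prop) : 0 ≤ pr p E := by
  rw [pr_eq_sum_bernoulliWeight]
  exact sum_nonneg fun g _ => by split <;> simp [bernoulliWeight_nonneg hp0 hp1]

lemma pr_mono (hp0 : 0 ≤ p) (hp1 : p ≤ 1) {E F : (α → Bool) → Prop} (h : ∀ g, E g → F g) :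
    pr p E ≤ pr p F := by
  simp only [pr_eq_sum_bernoulliWeight]
  refine sum_le_sum fun g _ => ?_
  by_cases hE : E g
  · simp [hE, h g hE]
  · simp only [hE, if_false]
    split <;> simp [bernoulliWeight_nonneg hp0 hp1]

lemma pr_not (E : (α → Bool) → Prop) : pr p (fun g => ¬E g) = 1 - pr p E := by
  have h_total : pr p E + pr p (fun g => ¬E g) = 1 := by
    rw [← sum_bernoulliWeight (α := α) (p := p)]
    simp only [pr_eq_sum_bernoulliWeight, ← sum_add_distrib]
    refine sum_congr rfl fun g _ => ?_
    by_cases hE : E g <;> simp [hE]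
  linarith

lemma pr_forall_not_forall_blue {ι κ : Type*} [Fintype ι] [Fintype κ] (e : ι × κ ↪ α) :
    pr p (fun g => ∀ i, ¬∀ j, g (e (i, j)) = true) =
      (1 - p ^ Fintype.card κ) ^ Fintype.card ι := by
  classical
  set block : ι → (α → Bool) → ℝ := fun i g => ∏ j, if g (e (i, j)) = true then 1 else 0
  have h_indicator : ∀ g : α → Bool,
      (if ∀ i, ¬∀ j, g (e (i, j)) = true then 1 else 0) = ∏ i, (1 - block i g) := by
    intro g
    have h_factor : ∀ i, 1 - block i g = if ¬∀ j, g (e (i, j)) = true then 1 else 0 := fun i => by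
      simp only [block, prod_boole, mem_univ, true_implies]
      split_ifs <;> norm_num
    simp only [h_factor, prod_boole, mem_univ, true_implies]
  have h_mean : ∀ T : Finset ι,
      bernoulliMean p (fun g => ∏ i ∈ T, block i g) = (p ^ Fintype.card κ) ^ #T := by
    intro T
    have h_flat : (fun g => ∏ i ∈ T, block i g) =
        fun g => ∏ v ∈ (T ×ˢ univ).map e, if g v = true then 1 else 0 := by
      funext g
      rw [prod_map, prod_product]
    rw [h_flat, bernoulliMean_prod_indicator, card_map, card_product, card_univ, mul_comm,
      pow_mul]
  calc pr p (fun g => ∀ i, ¬∀ j, g (e (i, j)) = true)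
      = bernoulliMean p (fun g => ∏ i, (1 - block i g)) := by
        rw [pr_eq_bernoulliMean]
        congr 1
        funext g
        convert h_indicator g
    _ = bernoulliMean p (fun g => ∑ T ∈ univ.powerset, (-1) ^ #T * ∏ i ∈ T, block i g) := by
        congr 1
        funext g
        rw [prod_sub (fun _ => 1) (fun i => block i g)]
        simp only [prod_const_one, mul_one]
    _ = ∑ T ∈ (univ : Finset ι).powerset, (-1) ^ #T * (p ^ Fintype.card κ) ^ #T := by
        simp only [bernoulliMean_sum, bernoulliMean_const_mul, h_mean]
    _ = (1 - p ^ Fintype.card κ) ^ Fintype.card ι := by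
        rw [sub_eq_neg_add, ← card_univ (α := ι), ← sum_pow_mul_eq_add_pow]
        exact sum_congr rfl fun T _ => by ring

end Pr

section Torus

def HasBlueBlockDiagonal (n : ℕ) (g : ZMod n × ZMod n → Bool) : Prop :=
  ∃ x y : ZMod n, (g (x, y) = true ∧ g (x + 1, y + 1) = true) ∨
    (g (x + 1, y) = true ∧ g (x, y + 1) = true)

variable {n : ℕ}

-- each off-diagonal cell of the block has both diagonal cells among its neighbors, and vice versa
lemma HasBlueBlockDiagonal.step {g : ZMod n × ZMod n → Bool}
    (h : HasBlueBlockDiagonal n g) : HasBlueBlockDiagonal n (torusBMajStep n g) := by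
  obtain ⟨x, y, ⟨h₁, h₂⟩ | ⟨h₁, h₂⟩⟩ := h
  · refine ⟨x, y, Or.inr ⟨decide_eq_true ?_, decide_eq_true ?_⟩⟩ <;>
      simp [vnCount, h₁, h₂] <;> omega
  · refine ⟨x, y, Or.inl ⟨decide_eq_true ?_, decide_eq_true ?_⟩⟩ <;>
      simp [vnCount, h₁, h₂] <;> omega

lemma HasBlueBlockDiagonal.iterate_torusBMajStep {g : ZMod n × ZMod n → Bool}
    (h : HasBlueBlockDiagonal n g) (t : ℕ) :
    HasBlueBlockDiagonal n ((torusBMajStep n)^[t] g) := by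
  induction t with
  | zero => exact h
  | succ t ih => rw [Function.iterate_succ_apply']; exact ih.step

lemma HasBlueBlockDiagonal.exists_eq_true {g : ZMod n × ZMod n → Bool}
    (h : HasBlueBlockDiagonal n g) : ∃ v, g v = true := by
  obtain ⟨x, y, ⟨h₁, -⟩ | ⟨h₁, -⟩⟩ := h
  exacts [⟨_, h₁⟩, ⟨_, h₁⟩]

lemma ZMod.eq_of_natCast_eq_of_lt {a b : ℕ} (ha : a < n) (hb : b < n)
    (h : (a : ZMod n) = b) : a = b := by
  rwa [ZMod.natCast_eq_natCast_iff', Nat.mod_eq_of_lt ha, Nat.mod_eq_of_lt hb] at h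

def diagonalPairs (n : ℕ) : (Fin (n / 2) × Fin (n / 2)) × Fin 2 ↪ ZMod n × ZMod n where
  toFun b := (((2 * b.1.1 + b.2 : ℕ) : ZMod n), ((2 * b.1.2 + b.2 : ℕ) : ZMod n))
  inj' := by
    rintro ⟨⟨i, j⟩, k⟩ ⟨⟨i', j'⟩, k'⟩ h
    simp only [Prod.mk.injEq] at h
    have hx := ZMod.eq_of_natCast_eq_of_lt (by omega) (by omega) h.1
    have hy := ZMod.eq_of_natCast_eq_of_lt (by omega) (by omega) h.2
    simp only [Prod.mk.injEq, Fin.ext_iff]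
    omega

lemma exists_blue_diagonal_pair_of_diagonalPairs {g : ZMod n × ZMod n → Bool}
    (b : Fin (n / 2) × Fin (n / 2)) (h : ∀ k, g (diagonalPairs n (b, k)) = true) :
    ∃ i j : ZMod n, g (2 * i, 2 * j) = true ∧ g (2 * i + 1, 2 * j + 1) = true := by
  refine ⟨b.1, b.2, ?_, ?_⟩
  · simpa [diagonalPairs] using h 0
  · simpa [diagonalPairs] using h 1

end Torus

lemma tendsto_one_sub_pow_nhds_zero {q : ℕ → ℝ} {K : ℕ → ℕ} (hq : ∀ n, q n ≤ 1)
    (h : Tendsto (fun n => K n * q n) atTop atTop) :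
    Tendsto (fun n => (1 - q n) ^ K n) atTop (nhds 0) := by
  refine squeeze_zero (fun n => pow_nonneg (sub_nonneg.2 (hq n)) _) (fun n => ?_)
    (Real.tendsto_exp_atBot.comp (tendsto_neg_atTop_atBot.comp h))
  calc (1 - q n) ^ K n ≤ Real.exp (-q n) ^ K n :=
        pow_le_pow_left₀ (sub_nonneg.2 (hq n)) (Real.one_sub_le_exp_neg _) _
    _ = Real.exp (-(K n * q n)) := by rw [← Real.exp_nat_mul, mul_neg]

lemma tendsto_pr_nhds_one {α : ℕ → Type*} [∀ n, Fintype (α n)] [∀ n, DecidableEq (α n)]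
    {p : ℕ → ℝ} (hp0 : ∀ n, 0 ≤ p n) (hp1 : ∀ n, p n ≤ 1)
    {E F : ∀ n, (α n → Bool) → Prop} (hEF : ∀ n g, ¬E n g → F n g)
    (hF : Tendsto (fun n => pr (p n) (F n)) atTop (nhds 0)) :
    Tendsto (fun n => pr (p n) (E n)) atTop (nhds 1) := by
  have h_not : Tendsto (fun n => pr (p n) (fun g => ¬E n g)) atTop (nhds 0) :=
    squeeze_zero (fun n => pr_nonneg (hp0 n) (hp1 n) _)
      (fun n => pr_mono (hp0 n) (hp1 n) (hEF n)) hF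
  simpa only [pr_not, sub_sub_cancel, sub_zero] using h_not.const_sub 1

/-- Biased majority model on the torus with von Neumann neighborhood: if
`p_b = ω(n^{-1})`, then w.h.p. the initial generation contains a diagonal pair
`{(2i,2j), (2i+1,2j+1)}` both of whose cells are blue, and consequently blue survives
in all subsequent generations. -/
theorem stmt16 (p : ℕ → ℝ) (hp0 : ∀ n, 0 ≤ p n) (hp1 : ∀ n, p n ≤ 1)
    (hbig : Tendsto (fun n : ℕ => p n * (n + 1)) atTop atTop) :
    Tendsto (fun n : ℕ =>
        pr (α := ZMod (n + 1) × ZMod (n + 1)) (p n)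
          (fun g =>
            (∃ i j : ZMod (n + 1),
                g (2 * i, 2 * j) = true ∧ g (2 * i + 1, 2 * j + 1) = true) ∧
              ∀ t : ℕ, ∃ v, (torusBMajStep (n + 1))^[t] g v = true))
      atTop (nhds 1) := by
  have h_half : Tendsto (fun n : ℕ => (((n + 1) / 2 : ℕ) : ℝ) * p n) atTop atTop := by
    refine tendsto_atTop_mono (fun n => ?_)
      ((tendsto_atTop_add_const_right atTop (-1) hbig).atTop_div_const two_pos)
    have h_floor : (n : ℝ) ≤ 2 * (((n + 1) / 2 : ℕ) : ℝ) := by exact_mod_cast (by omega)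
    nlinarith [hp0 n, hp1 n]
  have h_decay : Tendsto (fun n => (1 - p n ^ 2) ^ ((n + 1) / 2 * ((n + 1) / 2))) atTop
      (nhds 0) := by
    refine tendsto_one_sub_pow_nhds_zero (fun n => by nlinarith [hp0 n, hp1 n]) ?_
    refine (h_half.atTop_mul_atTop₀ h_half).congr fun n => ?_
    push_cast
    ring
  refine tendsto_pr_nhds_one hp0 hp1
    (F := fun n g => ∀ b, ¬∀ k, g (diagonalPairs (n + 1) (b, k)) = true)
    (fun n g hg b hb => hg ?_) (h_decay.congr fun n => ?_)
  · obtain ⟨i, j, h₁, h₂⟩ := exists_blue_diagonal_pair_of_diagonalPairs b hb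
    have h_block : HasBlueBlockDiagonal (n + 1) g := ⟨2 * i, 2 * j, .inl ⟨h₁, h₂⟩⟩
    exact ⟨⟨i, j, h₁, h₂⟩, fun t => (h_block.iterate_torusBMajStep t).exists_eq_true⟩
  · rw [pr_forall_not_forall_blue]
    simp
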